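/- Let A ∈ T_{p,n} (p ≥ 2) be nonsingular, let λ(A) > 0 be the minimum of ‖A x^{p-1}‖² over the unit sphere, and let B ∈ T_{p,n} satisfy ‖B‖_Frob < √(λ(A)). Then for any b ∈ ℝⁿ, every solution x of A x^{p-1} + B |x|^{p-1} = b satisfies ‖x‖ ≤ ‖b‖^{1/(p-1)} / (λ(A)^{1/(2(p-1))} − ‖B‖_Frob^{1/(p-1)}). -/

import Mathlib

/-! Put `k = p - 1` and `N = ‖x‖`. By homogeneity of `y ↦ A y^k` and the definition of `λ`,
`‖A x^k‖ ≥ √λ Nᵏ`, while Cauchy–Schwarz over multi-indices gives `‖B |x|^k‖ ≤ ‖B‖_F Nᵏ`.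
The equation and the triangle inequality then give `(√λ - ‖B‖_F) Nᵏ ≤ ‖b‖`, and the bound follows
by taking `k`-th roots, using the subadditivity `a^{1/k} ≤ (a - c)^{1/k} + c^{1/k}`. -/

/-- `(A x^{k})_i = Σ_{j : Fin k → Fin n} a_{i j₁ … j_k} x_{j₁} ⋯ x_{j_k}` :
the tensor-vector product of a tensor of order `k+1` with `x`, `k` times. -/
noncomputable def tvec {n k : ℕ} (A : Fin n → (Fin k → Fin n) → ℝ) (x : Fin n → ℝ) :
    Fin n → ℝ :=
  fun i => ∑ j : Fin k → Fin n, A i j * ∏ l, x (j l)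

/-- The Euclidean norm of a vector in `ℝⁿ`. -/
noncomputable def enorm {n : ℕ} (x : Fin n → ℝ) : ℝ :=
  Real.sqrt (∑ i, x i ^ 2)

/-- The Frobenius norm of a tensor in `T_{k+1,n}`. -/
noncomputable def frob {n k : ℕ} (A : Fin n → (Fin k → Fin n) → ℝ) : ℝ :=
  Real.sqrt (∑ i, ∑ j : Fin k → Fin n, A i j ^ 2)

theorem enorm_eq_norm_toLp {n : ℕ} (x : Fin n → ℝ) : _root_.enorm x = ‖WithLp.toLp 2 x‖ := by
  simp [_root_.enorm, EuclideanSpace.norm_eq]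

theorem sum_sq_eq_enorm_sq {n : ℕ} (x : Fin n → ℝ) : ∑ i, x i ^ 2 = _root_.enorm x ^ 2 :=
  (Real.sq_sqrt (Finset.sum_nonneg fun i _ => sq_nonneg (x i))).symm

theorem enorm_abs {n : ℕ} (x : Fin n → ℝ) : _root_.enorm (fun j => |x j|) = _root_.enorm x := by
  simp [_root_.enorm]

theorem tvec_smul {n k : ℕ} (C : Fin n → (Fin k → Fin n) → ℝ) (c : ℝ) (y : Fin n → ℝ) :
    tvec C (c • y) = c ^ k • tvec C y := by
  ext i
  simp only [tvec, Pi.smul_apply, smul_eq_mul, Finset.mul_sum, Finset.prod_mul_distrib,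
    Finset.prod_const, Finset.card_univ, Fintype.card_fin]
  exact Finset.sum_congr rfl fun j _ => by ring

theorem sum_sq_tvec_le {n k : ℕ} (C : Fin n → (Fin k → Fin n) → ℝ) (y : Fin n → ℝ) :
    ∑ i, tvec C y i ^ 2 ≤ (∑ i, ∑ j : Fin k → Fin n, C i j ^ 2) * (∑ i, y i ^ 2) ^ k := by
  have hpow : (∑ i, y i ^ 2) ^ k = ∑ j : Fin k → Fin n, (∏ l, y (j l)) ^ 2 := by
    rw [← Fin.prod_const k, Fintype.prod_sum]
    simp only [Finset.prod_pow]
  rw [hpow, Finset.sum_mul]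
  exact Finset.sum_le_sum fun i _ => Finset.sum_mul_sq_le_sq_mul_sq _ _ _

theorem enorm_tvec_le {n k : ℕ} (C : Fin n → (Fin k → Fin n) → ℝ) (y : Fin n → ℝ) :
    _root_.enorm (tvec C y) ≤ frob C * _root_.enorm y ^ k := by
  refine Real.sqrt_le_iff.mpr
    ⟨mul_nonneg (Real.sqrt_nonneg _) (pow_nonneg (Real.sqrt_nonneg _) k), ?_⟩
  calc ∑ i, tvec C y i ^ 2 ≤ _ := sum_sq_tvec_le C y
    _ = (frob C * _root_.enorm y ^ k) ^ 2 := by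
      rw [sum_sq_eq_enorm_sq, frob, mul_pow, Real.sq_sqrt (by positivity), ← pow_mul, ← pow_mul,
        mul_comm 2 k]

theorem sqrt_mul_enorm_pow_le_enorm_tvec {n k : ℕ} (hk : k ≠ 0)
    (A : Fin n → (Fin k → Fin n) → ℝ) {lam : ℝ}
    (hlam : lam ∈ lowerBounds {r : ℝ | ∃ x : Fin n → ℝ,
      (∑ i, x i ^ 2) = 1 ∧ r = ∑ i, tvec A x i ^ 2})
    (y : Fin n → ℝ) :
    Real.sqrt lam * _root_.enorm y ^ k ≤ _root_.enorm (tvec A y) := by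
  rcases eq_or_ne y 0 with rfl | hy
  · simp [enorm_eq_norm_toLp, zero_pow hk]
  have hs : 0 < _root_.enorm y := by
    rw [enorm_eq_norm_toLp]; exact norm_pos_iff.mpr (by simpa using hy)
  set s := _root_.enorm y
  set u := s⁻¹ • y with hu_def
  have hu : _root_.enorm u = 1 := by
    rw [enorm_eq_norm_toLp, WithLp.toLp_smul, norm_smul, ← enorm_eq_norm_toLp,
      Real.norm_of_nonneg (inv_nonneg.mpr hs.le), inv_mul_cancel₀ hs.ne']
  have hAu : Real.sqrt lam ≤ _root_.enorm (tvec A u) :=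
    Real.sqrt_le_sqrt (hlam ⟨u, by rw [sum_sq_eq_enorm_sq, hu, one_pow], rfl⟩)
  have hAy : tvec A y = s ^ k • tvec A u := by
    rw [hu_def, tvec_smul, smul_smul, ← mul_pow, mul_inv_cancel₀ hs.ne', one_pow, one_smul]
  calc Real.sqrt lam * s ^ k ≤ _root_.enorm (tvec A u) * s ^ k := by gcongr
    _ = _root_.enorm (tvec A y) := by
      rw [hAy, enorm_eq_norm_toLp, enorm_eq_norm_toLp, WithLp.toLp_smul, norm_smul,
        Real.norm_of_nonneg (by positivity), mul_comm]

theorem le_rpow_div_sub_of_mul_pow_le {k : ℕ} (hk : k ≠ 0) {a c N β : ℝ} (hc : 0 ≤ c)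
    (hca : c < a) (hN : 0 ≤ N) (h : (a - c) * N ^ k ≤ β) :
    N ≤ β ^ (1 / (k : ℝ)) / (a ^ (1 / (k : ℝ)) - c ^ (1 / (k : ℝ))) := by
  have hexp : (0 : ℝ) < 1 / k := by positivity
  have hsubadd : a ^ (1 / (k : ℝ)) ≤ (a - c) ^ (1 / (k : ℝ)) + c ^ (1 / (k : ℝ)) := by
    simpa using Real.rpow_add_le_add_rpow (sub_nonneg.mpr hca.le) hc hexp.le
      (div_le_one_of_le₀ (by exact_mod_cast Nat.one_le_iff_ne_zero.mpr hk) (by positivity))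
  have hgap : 0 < a ^ (1 / (k : ℝ)) - c ^ (1 / (k : ℝ)) :=
    sub_pos.mpr (Real.rpow_lt_rpow hc hca hexp)
  rw [le_div_iff₀ hgap]
  calc N * (a ^ (1 / (k : ℝ)) - c ^ (1 / (k : ℝ)))
      ≤ (N ^ k) ^ (1 / (k : ℝ)) * (a - c) ^ (1 / (k : ℝ)) := by
        rw [one_div, Real.pow_rpow_inv_natCast hN hk, ← one_div]
        gcongr; linarith
    _ = ((a - c) * N ^ k) ^ (1 / (k : ℝ)) := by
        rw [Real.mul_rpow (by linarith) (by positivity), mul_comm]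
    _ ≤ β ^ (1 / (k : ℝ)) := by gcongr

theorem solution_upper_bound_general {p n : ℕ} (hp : 2 ≤ p)
    (A B : Fin n → (Fin (p - 1) → Fin n) → ℝ)
    (lam : ℝ)
    (hlam : IsLeast {r : ℝ | ∃ x : Fin n → ℝ,
      (∑ i, x i ^ 2) = 1 ∧ r = ∑ i, tvec A x i ^ 2} lam)
    (hB : frob B < Real.sqrt lam)
    (b : Fin n → ℝ) (x : Fin n → ℝ)
    (hx : ∀ i, tvec A x i + tvec B (fun j => |x j|) i = b i) :
    _root_.enorm x ≤ _root_.enorm b ^ ((1 : ℝ) / (p - 1)) /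
      (lam ^ ((1 : ℝ) / (2 * (p - 1))) - frob B ^ ((1 : ℝ) / (p - 1))) := by
  have hk : p - 1 ≠ 0 := by omega
  have hk_cast : ((p - 1 : ℕ) : ℝ) = (p : ℝ) - 1 := by
    rw [Nat.cast_sub (by omega), Nat.cast_one]
  have hB0 : 0 ≤ frob B := Real.sqrt_nonneg _
  have hlam0 : 0 ≤ lam := (Real.sqrt_pos.mp (hB0.trans_lt hB)).le
  have hAx : tvec A x = b - tvec B (fun j => |x j|) := funext fun i => eq_sub_of_add_eq (hx i)
  have htri :
      _root_.enorm (tvec A x) ≤ _root_.enorm b + _root_.enorm (tvec B (fun j => |x j|)) := by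
    simp only [hAx, enorm_eq_norm_toLp, WithLp.toLp_sub]
    exact norm_sub_le _ _
  have hlow := sqrt_mul_enorm_pow_le_enorm_tvec hk A hlam.2 x
  have hup := enorm_tvec_le B (fun j => |x j|)
  rw [enorm_abs] at hup
  have hkey : (Real.sqrt lam - frob B) * _root_.enorm x ^ (p - 1) ≤ _root_.enorm b := by
    linarith
  have hbound := le_rpow_div_sub_of_mul_pow_le hk hB0 hB (Real.sqrt_nonneg _) hkey
  have hroot : Real.sqrt lam ^ ((1 : ℝ) / (p - 1)) = lam ^ ((1 : ℝ) / (2 * (p - 1))) := by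
    rw [Real.sqrt_eq_rpow, ← Real.rpow_mul hlam0, one_div_mul_one_div]
  rwa [hk_cast, hroot] at hbound

/-- Let `A ∈ T_{p,n}` be nonsingular with `λ(A) > 0` the minimum of `‖A x^{p-1}‖²` over
the unit sphere, and let `B ∈ T_{p,n}` satisfy `‖B‖_F < √(λ(A))`.  Then every solution
`x` of `A x^{p-1} + B |x|^{p-1} = b` satisfies
`‖x‖ ≤ ‖b‖^{1/(p-1)} / (λ(A)^{1/(2(p-1))} − ‖B‖_F^{1/(p-1)})`. -/
theorem solution_upper_bound {p n : ℕ} (hp : 2 ≤ p)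
    (A B : Fin n → (Fin (p - 1) → Fin n) → ℝ)
    (hA : ∀ x : Fin n → ℝ, tvec A x = 0 → x = 0)
    (lam : ℝ) (hlam_pos : 0 < lam)
    (hlam : IsLeast {r : ℝ | ∃ x : Fin n → ℝ,
      (∑ i, x i ^ 2) = 1 ∧ r = ∑ i, tvec A x i ^ 2} lam)
    (hB : frob B < Real.sqrt lam)
    (b : Fin n → ℝ) (x : Fin n → ℝ)
    (hx : ∀ i, tvec A x i + tvec B (fun j => |x j|) i = b i) :
    _root_.enorm x ≤ _root_.enorm b ^ ((1 : ℝ) / (p - 1)) /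
      (lam ^ ((1 : ℝ) / (2 * (p - 1))) - frob B ^ ((1 : ℝ) / (p - 1))) :=
  solution_upper_bound_general hp A B lam hlam hB b x hx
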